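/- arXiv:1611.06316 — 4 statements merged into one kernel-verified Lean document; each statement's English description precedes it below -/
import Mathlib

section
/- With the same parametrization of the scattering direction, for each pair of indices i, j one has ∫_{-π}^{π} (v'_i - v_i)(v'_j - v_j) dφ = π sin⁴(θ/2)(2 u_i u_j - |u|² Π(u)_{ij}) + π |u|² Π(u)_{ij} sin²(θ/2), where Π(u) = I - û ⊗ û. -/
open Real MeasureTheory
open scoped Matrix

/-
Write `s = sin (θ/2)`, so `cos θ - 1 = -2s²` and `sin² θ = 4s²(1 - s²)`. Componentwise,
`v' - v = ((cos θ - 1)/2) u + (|u| sin θ / 2)(cos φ · j + sin φ · k)`, and over a full period the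
cross terms in `cos φ`, `sin φ` and `sin φ cos φ` integrate to zero while `cos² φ` and `sin² φ`
both integrate to `π`. The second moment is therefore
`2π (s²)² uᵢuⱼ + π |u|² s²(1 - s²)(jᵢjⱼ + kᵢkⱼ)`, and `(û, j, k)` being an orthonormal frame
gives `jᵢjⱼ + kᵢkⱼ = Π(u)ᵢⱼ`.
-/

theorem cross_apply_mul_cross_apply {R : Type*} [CommRing R] (a b : Fin 3 → R) (i l : Fin 3) :
    (a ⨯₃ b) i * (a ⨯₃ b) l
      = (a ⬝ᵥ a * b ⬝ᵥ b - (a ⬝ᵥ b) ^ 2) * (if i = l then 1 else 0)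
        - b ⬝ᵥ b * (a i * a l) - a ⬝ᵥ a * (b i * b l) + a ⬝ᵥ b * (a i * b l + b i * a l) := by
  fin_cases i <;> fin_cases l <;> simp [cross_apply, dotProduct, Fin.sum_univ_three] <;> ring

theorem mul_add_cross_mul_cross_of_orthonormal {R : Type*} [CommRing R] {a b : Fin 3 → R}
    (ha : a ⬝ᵥ a = 1) (hb : b ⬝ᵥ b = 1) (hab : a ⬝ᵥ b = 0) (i l : Fin 3) :
    a i * a l + (a ⨯₃ b) i * (a ⨯₃ b) l = (if i = l then 1 else 0) - b i * b l := by
  rw [cross_apply_mul_cross_apply, ha, hb, hab]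
  ring

theorem mul_add_cross_normalize_mul_cross_normalize {u j : EuclideanSpace ℝ (Fin 3)}
    (hu : u ≠ 0) (hj : ‖j‖ = 1) (huj : inner ℝ u j = (0 : ℝ)) (i l : Fin 3) :
    let û : Fin 3 → ℝ := fun m => u m / ‖u‖
    j i * j l + (WithLp.ofLp j ⨯₃ û) i * (WithLp.ofLp j ⨯₃ û) l
      = (if i = l then 1 else 0) - û i * û l := by
  intro û
  have hnorm : ‖u‖ ≠ 0 := norm_ne_zero_iff.mpr hu
  have hûû : û ⬝ᵥ û = 1 := by
    have h := real_inner_self_eq_norm_sq u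
    rw [EuclideanSpace.inner_eq_star_dotProduct] at h
    simp only [û, dotProduct, Fin.sum_univ_three, star_trivial] at h ⊢
    field_simp
    linarith
  have hjj : WithLp.ofLp j ⬝ᵥ WithLp.ofLp j = 1 := by
    have h := real_inner_self_eq_norm_sq j
    rwa [EuclideanSpace.inner_eq_star_dotProduct, star_trivial, hj, one_pow] at h
  have hjû : WithLp.ofLp j ⬝ᵥ û = 0 := by
    rw [EuclideanSpace.inner_eq_star_dotProduct] at huj
    simp only [û, dotProduct, Fin.sum_univ_three, star_trivial] at huj ⊢
    field_simp
    linarith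
  exact mul_add_cross_mul_cross_of_orthonormal hjj hûû hjû i l

theorem integral_trig_affine_mul_trig_affine (a b c d e f : ℝ) :
    ∫ φ in (-π)..π, (a + b * cos φ + c * sin φ) * (d + e * cos φ + f * sin φ)
      = 2 * π * (a * d) + π * (b * e) + π * (c * f) := by
  have expand : ∀ φ, (a + b * cos φ + c * sin φ) * (d + e * cos φ + f * sin φ)
      = a * d + ((a * e + b * d) * cos φ + ((a * f + c * d) * sin φ + ((b * e) * cos φ ^ 2
        + ((c * f) * sin φ ^ 2 + (b * f + c * e) * (sin φ * cos φ))))) := fun φ => by ring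
  have hint : ∀ g : ℝ → ℝ, Continuous g → IntervalIntegrable g volume (-π) π :=
    fun g hg => hg.intervalIntegrable _ _
  simp_rw [expand]
  repeat rw [intervalIntegral.integral_add (hint _ (by fun_prop)) (hint _ (by fun_prop))]
  simp only [intervalIntegral.integral_const_mul, intervalIntegral.integral_const, integral_cos,
    integral_sin, integral_cos_sq, integral_sin_sq, integral_sin_mul_cos₁, sin_neg, cos_neg,
    sin_pi, cos_pi, smul_eq_mul]
  ring

theorem stmt_2_general (u j k : EuclideanSpace ℝ (Fin 3)) (hu : u ≠ 0)
    (hj : ‖j‖ = 1) (huj : inner ℝ u j = (0:ℝ))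
    (hk0 : k 0 = j 1 * (u 2 / ‖u‖) - j 2 * (u 1 / ‖u‖))
    (hk1 : k 1 = j 2 * (u 0 / ‖u‖) - j 0 * (u 2 / ‖u‖))
    (hk2 : k 2 = j 0 * (u 1 / ‖u‖) - j 1 * (u 0 / ‖u‖))
    (θ : ℝ)
    (σ : ℝ → EuclideanSpace ℝ (Fin 3))
    (hσ : ∀ φ, σ φ = Real.cos θ • (‖u‖⁻¹ • u) + Real.sin θ • (Real.cos φ • j + Real.sin φ • k))
    (vdiff : ℝ → EuclideanSpace ℝ (Fin 3))
    (hvdiff : ∀ φ, vdiff φ = (1/2 : ℝ) • (‖u‖ • σ φ - u))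
    (Pu : Fin 3 → Fin 3 → ℝ)
    (hPu : ∀ i l, Pu i l = (if i = l then 1 else 0) - (u i / ‖u‖) * (u l / ‖u‖)) :
    ∀ i l : Fin 3,
      (∫ φ in (-π)..π, (vdiff φ i) * (vdiff φ l))
        = π * Real.sin (θ/2)^4 * (2 * u i * u l - ‖u‖^2 * Pu i l)
          + π * ‖u‖^2 * Pu i l * Real.sin (θ/2)^2 := by
  have hk : ∀ i, k i = (WithLp.ofLp j ⨯₃ fun m => u m / ‖u‖) i := by
    intro i
    fin_cases i <;> simp [cross_apply, hk0, hk1, hk2]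
  have hframe : ∀ i l, j i * j l + k i * k l = Pu i l := fun i l => by
    rw [hk, hk, hPu]
    exact mul_add_cross_normalize_mul_cross_normalize hu hj huj i l
  have hvdiff_apply : ∀ φ i, vdiff φ i = (cos θ - 1) / 2 * u i
      + (‖u‖ * sin θ / 2 * j i) * cos φ + (‖u‖ * sin θ / 2 * k i) * sin φ := by
    intro φ i
    simp only [hvdiff, hσ, PiLp.smul_apply, PiLp.add_apply, PiLp.sub_apply, smul_eq_mul]
    field_simp
    ring
  have hcos : cos θ = 1 - 2 * sin (θ / 2) ^ 2 := by
    rw [← cos_two_mul_eq_one_sub, mul_div_cancel₀ θ two_ne_zero]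
  have hsin_sq : sin θ ^ 2 = 4 * sin (θ / 2) ^ 2 - 4 * sin (θ / 2) ^ 4 := by
    rw [sin_sq, hcos]
    ring
  intro i l
  simp_rw [hvdiff_apply, integral_trig_affine_mul_trig_affine, ← hframe i l, hcos]
  linear_combination (π * ‖u‖ ^ 2 / 4 * (j i * j l + k i * k l)) * hsin_sq

/-- The second angular moment of the velocity change:
`∫_{-π}^{π} (v'_i - v_i)(v'_j - v_j) dφ
  = π sin⁴(θ/2)(2 uᵢuⱼ - |u|² Pu(u)ᵢⱼ) + π |u|² Pu(u)ᵢⱼ sin²(θ/2)`,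
where `Pu(u) = I - û ⊗ û` and `k = j × û`. -/
theorem stmt_2 (u j k : EuclideanSpace ℝ (Fin 3)) (hu : u ≠ 0)
    (hj : ‖j‖ = 1) (huj : inner ℝ u j = (0:ℝ))
    (hk0 : k 0 = j 1 * (u 2 / ‖u‖) - j 2 * (u 1 / ‖u‖))
    (hk1 : k 1 = j 2 * (u 0 / ‖u‖) - j 0 * (u 2 / ‖u‖))
    (hk2 : k 2 = j 0 * (u 1 / ‖u‖) - j 1 * (u 0 / ‖u‖))
    (θ : ℝ) (hθ : θ ∈ Set.Icc 0 (π/2))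
    (σ : ℝ → EuclideanSpace ℝ (Fin 3))
    (hσ : ∀ φ, σ φ = Real.cos θ • (‖u‖⁻¹ • u) + Real.sin θ • (Real.cos φ • j + Real.sin φ • k))
    (vdiff : ℝ → EuclideanSpace ℝ (Fin 3))
    (hvdiff : ∀ φ, vdiff φ = (1/2 : ℝ) • (‖u‖ • σ φ - u))
    (Pu : Fin 3 → Fin 3 → ℝ)
    (hPu : ∀ i l, Pu i l = (if i = l then 1 else 0) - (u i / ‖u‖) * (u l / ‖u‖)) :
    ∀ i l : Fin 3,
      (∫ φ in (-π)..π, (vdiff φ i) * (vdiff φ l))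
        = π * Real.sin (θ/2)^4 * (2 * u i * u l - ‖u‖^2 * Pu i l)
          + π * ‖u‖^2 * Pu i l * Real.sin (θ/2)^2 :=
  stmt_2_general u j k hu hj huj hk0 hk1 hk2 θ σ hσ vdiff hvdiff Pu hPu
end

section
/- For -3 ≤ γ < 0, ε > 0, k > 2, and u ≠ 0, the k-th angular moment of the angle-potential concentrated kernel satisfies β_k[g_ε](u) := ∫₀¹ g_ε(|u|^γ, μ) ((1-μ)/2)^{k/2} dμ = (2^{2-k/2}/π) ε^{k/2 - 1} |u|^{γk/2} 1_{ε|u|^γ ≤ 1}, and hence β_k[g_ε](u) → 0 as ε → 0 pointwise in u. -/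
open Real MeasureTheory

/-- The angle-potential concentrated kernel
`g_ε(|u|^γ, μ) = (4/(πε)) δ₀(1 - μ - min{2, ε|u|^γ})`, viewed as the measure
`(4/(πε)) · dirac(1 - min{2, ε|u|^γ})` in the angular variable `μ`. -/
noncomputable def gepsMeasure (γ ε r : ℝ) : Measure ℝ :=
  ENNReal.ofReal (4 / (π * ε)) • Measure.dirac (1 - min 2 (ε * r ^ γ))

/-- For `k > 2`, `β_k[g_ε](u) = ∫₀¹ g_ε(|u|^γ,μ)((1-μ)/2)^{k/2} dμ
  = (2^{2-k/2}/π) ε^{k/2-1} |u|^{γk/2} 1_{ε|u|^γ ≤ 1}`, which tends to `0` as `ε → 0⁺`. -/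
theorem stmt_7 (γ : ℝ) (hγ : γ ∈ Set.Ico (-3 : ℝ) 0) (k : ℝ) (hk : 2 < k)
    (u : EuclideanSpace ℝ (Fin 3)) (hu : u ≠ 0) :
    (∀ ε : ℝ, 0 < ε →
      (∫ μ in Set.Icc (0:ℝ) 1, ((1 - μ) / 2) ^ (k/2) ∂(gepsMeasure γ ε ‖u‖))
        = ((2:ℝ) ^ (2 - k/2) / π) * ε ^ (k/2 - 1) * ‖u‖ ^ (γ * k / 2)
            * (if ε * ‖u‖ ^ γ ≤ 1 then 1 else 0)) ∧
    Filter.Tendsto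
      (fun ε : ℝ =>
        ∫ μ in Set.Icc (0:ℝ) 1, ((1 - μ) / 2) ^ (k/2) ∂(gepsMeasure γ ε ‖u‖))
      (nhdsWithin 0 (Set.Ioi 0)) (nhds 0) := by
  have hr : (0:ℝ) < ‖u‖ := norm_pos_iff.mpr hu
  have hrγ : (0:ℝ) < ‖u‖ ^ γ := Real.rpow_pos_of_pos hr γ
  have hmain : ∀ ε : ℝ, 0 < ε →
      (∫ μ in Set.Icc (0:ℝ) 1, ((1 - μ) / 2) ^ (k/2) ∂(gepsMeasure γ ε ‖u‖))
        = ((2:ℝ) ^ (2 - k/2) / π) * ε ^ (k/2 - 1) * ‖u‖ ^ (γ * k / 2)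
            * (if ε * ‖u‖ ^ γ ≤ 1 then 1 else 0) := by
    intro ε hε
    have hεr : 0 < ε * ‖u‖ ^ γ := mul_pos hε hrγ
    classical
    rw [gepsMeasure, Measure.restrict_smul, integral_smul_measure, setIntegral_dirac]
    by_cases h : ε * ‖u‖ ^ γ ≤ 1
    · have hmin : min 2 (ε * ‖u‖ ^ γ) = ε * ‖u‖ ^ γ :=
        min_eq_right (h.trans (by norm_num))
      have hpmem : 1 - min 2 (ε * ‖u‖ ^ γ) ∈ Set.Icc (0:ℝ) 1 := by
        rw [hmin]; constructor <;> [linarith; linarith]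
      rw [if_pos hpmem, if_pos h]
      have htoReal : (ENNReal.ofReal (4 / (π * ε))).toReal = 4 / (π * ε) :=
        ENNReal.toReal_ofReal (by positivity)
      rw [htoReal, hmin]
      have e1 : (1 : ℝ) - (1 - ε * ‖u‖ ^ γ) = ε * ‖u‖ ^ γ := by ring
      rw [e1]
      have h2 : ε ^ (k/2 - 1) = ε ^ (k/2) / ε := by
        rw [Real.rpow_sub hε, Real.rpow_one]
      have h3 : ((ε * ‖u‖ ^ γ) / 2) ^ (k/2)
          = ε ^ (k/2) * ‖u‖ ^ (γ * k / 2) / (2:ℝ) ^ (k/2) := by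
        rw [Real.div_rpow hεr.le (by norm_num : (0:ℝ) ≤ 2),
          Real.mul_rpow hε.le hrγ.le, ← Real.rpow_mul hr.le]
        ring_nf
      have h1 : (2:ℝ) ^ (2 - k/2) = 4 / (2:ℝ) ^ (k/2) := by
        rw [Real.rpow_sub (by norm_num : (0:ℝ) < 2)]
        norm_num [Real.rpow_two]
      have h2k : (0:ℝ) < (2:ℝ) ^ (k/2) := Real.rpow_pos_of_pos (by norm_num) _
      rw [smul_eq_mul, h3, h2, h1, mul_one]
      field_simp
    · have hpne : 1 - min 2 (ε * ‖u‖ ^ γ) ∉ Set.Icc (0:ℝ) 1 := by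
        intro hmem
        rcases le_or_gt (ε * ‖u‖ ^ γ) 2 with h2 | h2
        · have : min 2 (ε * ‖u‖ ^ γ) = ε * ‖u‖ ^ γ := min_eq_right h2
          rw [this] at hmem
          have := hmem.1
          linarith
        · have : min 2 (ε * ‖u‖ ^ γ) = 2 := min_eq_left h2.le
          rw [this] at hmem
          have := hmem.1
          linarith
      rw [if_neg hpne, if_neg h]
      simp
  refine ⟨hmain, ?_⟩
  have hpos : (0:ℝ) < (‖u‖ ^ γ)⁻¹ := inv_pos.mpr hrγ
  have hev : ∀ᶠ ε in nhdsWithin (0:ℝ) (Set.Ioi 0),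
      (fun ε : ℝ => ((2:ℝ) ^ (2 - k/2) / π * ‖u‖ ^ (γ * k / 2)) * ε ^ (k/2 - 1)) ε
        = (∫ μ in Set.Icc (0:ℝ) 1, ((1 - μ) / 2) ^ (k/2) ∂(gepsMeasure γ ε ‖u‖)) := by
    filter_upwards [Ioo_mem_nhdsGT_of_mem (by constructor <;> [rfl; exact hpos] :
        (0:ℝ) ∈ Set.Ico 0 (‖u‖ ^ γ)⁻¹)] with ε hε
    have h1 : ε * ‖u‖ ^ γ ≤ 1 := by
      rw [← le_div_iff₀ hrγ] at *
      simpa [div_eq_mul_inv] using hε.2.le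
    rw [hmain ε hε.1, if_pos h1]
    ring
  refine Filter.Tendsto.congr' hev ?_
  have hlim : Filter.Tendsto (fun ε : ℝ => ε ^ (k/2 - 1)) (nhdsWithin 0 (Set.Ioi 0))
      (nhds 0) := by
    have hc : ContinuousAt (fun x : ℝ => x ^ (k/2 - 1)) 0 :=
      Real.continuousAt_rpow_const 0 (k/2 - 1) (Or.inr (by linarith))
    have := hc.tendsto.mono_left (nhdsWithin_le_nhds (s := Set.Ioi (0:ℝ)))
    rwa [Real.zero_rpow (by linarith : k/2 - 1 ≠ 0)] at this
  have := hlim.const_mul ((2:ℝ) ^ (2 - k/2) / π * ‖u‖ ^ (γ * k / 2))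
  simpa using this
end

section
/- Let ε > 0, γ ∈ [-3,0), m_ε(x) := min{2, ε x^γ}, μ_ε(x) := 1 - m_ε(x), and a₁(x, μ) := x √((1+μ)/2) for x > 0. For measurable η : R⁺ → [0,∞) and p ∈ [1, ∞), the change-of-variables estimate J_{p,ε}(η) := ∫_{ε^{1/3}}^∞ η(a₁(x, μ_ε(x)))^p x² dx ≤ √2 ∫₀^∞ η(y)^p y² dy holds (for γ = -3, with a₁(x, μ_ε(x)) = √(x² - ε/(2x)) on x ≥ ε^{1/3}). -/
/-!
Substitute `y = a(x) = √(x² - ε/(2x))`, which is increasing on `x > ε^{1/3}`. There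
`a² ≥ x²/2` because `ε < x³`, and `a a' = x + ε/(4x²) ≥ x`, so `x² ≤ √2 a' a²`; the
monotone change of variables formula then bounds the left side by `√2 ∫ η(y)^p y² dy` over
the image of `a`, which lies in `(0, ∞)`.
-/

open Real MeasureTheory Set
open scoped ENNReal

theorem lintegral_comp_mul_le_of_monotoneOn {s t : Set ℝ} (hs : MeasurableSet s)
    {f f' : ℝ → ℝ} (hf' : ∀ x ∈ s, HasDerivWithinAt f (f' x) s x) (hf : MonotoneOn f s)
    (hst : MapsTo f s t) {w v : ℝ → ℝ≥0∞} {C : ℝ≥0∞} (hC : C ≠ ∞)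
    (hw : ∀ x ∈ s, w x ≤ C * (ENNReal.ofReal (f' x) * v (f x))) (u : ℝ → ℝ≥0∞) :
    ∫⁻ x in s, u (f x) * w x ≤ C * ∫⁻ y in t, u y * v y :=
  calc ∫⁻ x in s, u (f x) * w x
      ≤ ∫⁻ x in s, C * (ENNReal.ofReal (f' x) * (u (f x) * v (f x))) := by
        refine setLIntegral_mono' hs fun x hx => ?_
        calc u (f x) * w x ≤ u (f x) * (C * (ENNReal.ofReal (f' x) * v (f x))) := by
              gcongr; exact hw x hx
          _ = _ := by ring
    _ = C * ∫⁻ y in f '' s, u y * v y := by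
        rw [lintegral_const_mul' _ _ hC,
          lintegral_image_eq_lintegral_deriv_mul_of_monotoneOn hs hf' hf]
    _ ≤ C * ∫⁻ y in t, u y * v y := by
        gcongr; exact hst.image_subset

theorem hasDerivAt_sq_sub_div (ε : ℝ) {x : ℝ} (hx : x ≠ 0) :
    HasDerivAt (fun x => x ^ 2 - ε / (2 * x)) (2 * x + ε / (2 * x ^ 2)) x := by
  have hfun : (fun x => x ^ 2 - ε / (2 * x)) = (fun y => y ^ 2) - fun y => ε / 2 * y⁻¹ := by
    ext y; simp only [Pi.sub_apply]; ring
  rw [hfun]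
  exact ((hasDerivAt_pow 2 x).sub ((hasDerivAt_inv hx).const_mul (ε / 2))).congr_deriv
    (by field_simp; ring)

theorem strictMonoOn_sq_sub_div {ε : ℝ} (hε : 0 ≤ ε) :
    StrictMonoOn (fun x => x ^ 2 - ε / (2 * x)) (Ioi 0) := by
  intro x (hx : 0 < x) y (hy : 0 < y) hxy
  have : ε / (2 * y) ≤ ε / (2 * x) := by gcongr
  dsimp only
  nlinarith

theorem half_sq_lt_sq_sub_div {ε x : ℝ} (hx : 0 < x) (hεx : ε < x ^ 3) :
    x ^ 2 / 2 < x ^ 2 - ε / (2 * x) := by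
  have : ε / (2 * x) < x ^ 2 / 2 := by
    rw [div_lt_div_iff₀ (by positivity) two_pos]; nlinarith
  linarith

theorem lt_pow_three_of_rpow_third_lt {ε x : ℝ} (hε : 0 ≤ ε) (hx : ε ^ ((1 : ℝ) / 3) < x) :
    ε < x ^ 3 := by
  have hx0 : 0 ≤ x := (rpow_nonneg hε _).trans hx.le
  rw [one_div, rpow_inv_lt_iff_of_pos hε hx0 three_pos] at hx
  exact_mod_cast hx

noncomputable def shiftedRadius (ε x : ℝ) : ℝ := √(x ^ 2 - ε / (2 * x))

theorem hasDerivAt_shiftedRadius {ε x : ℝ} (hx : x ≠ 0) (hq : 0 < x ^ 2 - ε / (2 * x)) :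
    HasDerivAt (shiftedRadius ε) ((2 * x + ε / (2 * x ^ 2)) / (2 * shiftedRadius ε x)) x :=
  (hasDerivAt_sq_sub_div ε hx).sqrt hq.ne'

theorem monotoneOn_shiftedRadius {ε : ℝ} (hε : 0 ≤ ε) :
    MonotoneOn (shiftedRadius ε) (Ioi 0) :=
  fun _ hx _ hy hxy => sqrt_le_sqrt ((strictMonoOn_sq_sub_div hε).monotoneOn hx hy hxy)

theorem sq_le_sqrt_two_mul_deriv_mul_shiftedRadius_sq {ε x : ℝ} (hε : 0 ≤ ε) (hx : 0 < x)
    (hεx : ε < x ^ 3) :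
    x ^ 2 ≤ √2 * ((2 * x + ε / (2 * x ^ 2)) / (2 * shiftedRadius ε x) * shiftedRadius ε x ^ 2) := by
  have hq := half_sq_lt_sq_sub_div hx hεx
  have ha : 0 < shiftedRadius ε x := sqrt_pos.2 (by linarith [sq_nonneg x])
  have hxa : x ≤ √2 * shiftedRadius ε x := by
    rw [shiftedRadius, ← sqrt_mul zero_le_two, le_sqrt hx.le (by linarith [sq_nonneg x])]
    linarith
  have hε4 : 0 ≤ ε / (4 * x ^ 2) := by positivity
  calc x ^ 2 = x * x := sq x
    _ ≤ (x + ε / (4 * x ^ 2)) * (√2 * shiftedRadius ε x) := by gcongr; linarith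
    _ = _ := by field_simp; ring

theorem lintegral_comp_shiftedRadius_mul_sq_le {ε : ℝ} (hε : 0 ≤ ε) (u : ℝ → ℝ≥0∞) :
    ∫⁻ x in Ioi (ε ^ ((1 : ℝ) / 3)), u (shiftedRadius ε x) * ENNReal.ofReal (x ^ 2)
      ≤ ENNReal.ofReal √2 * ∫⁻ y in Ioi 0, u y * ENNReal.ofReal (y ^ 2) := by
  have hpos : ∀ x ∈ Ioi (ε ^ ((1 : ℝ) / 3)), 0 < x := fun x hx =>
    (rpow_nonneg hε _).trans_lt hx
  have hcube : ∀ x ∈ Ioi (ε ^ ((1 : ℝ) / 3)), ε < x ^ 3 := fun x hx =>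
    lt_pow_three_of_rpow_third_lt hε hx
  have hq : ∀ x ∈ Ioi (ε ^ ((1 : ℝ) / 3)), 0 < x ^ 2 - ε / (2 * x) := fun x hx =>
    lt_of_le_of_lt (by positivity) (half_sq_lt_sq_sub_div (hpos x hx) (hcube x hx))
  refine lintegral_comp_mul_le_of_monotoneOn measurableSet_Ioi
    (fun x hx => (hasDerivAt_shiftedRadius (hpos x hx).ne' (hq x hx)).hasDerivWithinAt)
    ((monotoneOn_shiftedRadius hε).mono hpos) (fun x hx => sqrt_pos.2 (hq x hx))
    ENNReal.ofReal_ne_top (fun x hx => ?_) u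
  rw [← ENNReal.ofReal_mul' (sq_nonneg _), ← ENNReal.ofReal_mul (sqrt_nonneg 2)]
  exact ENNReal.ofReal_le_ofReal
    (sq_le_sqrt_two_mul_deriv_mul_shiftedRadius_sq hε (hpos x hx) (hcube x hx))

theorem stmt_12_general (ε : ℝ) (hε : 0 < ε) (p : ℝ)
    (η : ℝ → ℝ)
    (a₁ : ℝ → ℝ) (ha₁ : ∀ x, a₁ x = Real.sqrt (x ^ 2 - ε / (2 * x))) :
    (∫⁻ x in Set.Ioi (ε ^ ((1:ℝ)/3)), ENNReal.ofReal (η (a₁ x) ^ p * x ^ 2))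
      ≤ ENNReal.ofReal (Real.sqrt 2)
          * ∫⁻ y in Set.Ioi (0:ℝ), ENNReal.ofReal (η y ^ p * y ^ 2) := by
  obtain rfl : a₁ = shiftedRadius ε := funext ha₁
  simp_rw [ENNReal.ofReal_mul' (sq_nonneg _)]
  exact lintegral_comp_shiftedRadius_mul_sq_le hε.le fun y => ENNReal.ofReal (η y ^ p)

/-- Change-of-variables estimate (γ = -3 case): with
`a₁(x, μ_ε(x)) = √(x² - ε/(2x))` on `x ≥ ε^{1/3}`,
`J_{p,ε}(η) = ∫_{ε^{1/3}}^∞ η(a₁(x, μ_ε(x)))^p x² dx ≤ √2 ∫₀^∞ η(y)^p y² dy`. -/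
theorem stmt_12 (ε : ℝ) (hε : 0 < ε) (p : ℝ) (hp : 1 ≤ p)
    (η : ℝ → ℝ) (hη : Measurable η) (hη0 : ∀ x, 0 ≤ η x)
    (a₁ : ℝ → ℝ) (ha₁ : ∀ x, a₁ x = Real.sqrt (x ^ 2 - ε / (2 * x))) :
    (∫⁻ x in Set.Ioi (ε ^ ((1:ℝ)/3)), ENNReal.ofReal (η (a₁ x) ^ p * x ^ 2))
      ≤ ENNReal.ofReal (Real.sqrt 2)
          * ∫⁻ y in Set.Ioi (0:ℝ), ENNReal.ofReal (η y ^ p * y ^ 2) :=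
  stmt_12_general ε hε p η a₁ ha₁
end

section
/- Let ε > 0 and define the one-dimensional bilinear operator B_ε(η, ψ)(x) := (4/(πε)) η(a₁(x, μ_ε(x))) ψ(a₂(x, μ_ε(x))) 1_{x ≥ ε^{1/3}}, where a₁(x,μ) = x√((1+μ)/2), a₂(x,μ) = x√((1-μ)/2), μ_ε(x) = 1 - min{2, ε x^{-3}}. Then for 1 ≤ p < ∞, η ∈ L^p(R⁺, x² dx) and ψ ∈ L^∞(R⁺): ‖B_ε(η, ψ)‖_{L^p(R⁺, x² dx)} ≤ (8/(πε)) ‖ψ‖_{L^∞(R⁺)} ‖η‖_{L^p(R⁺, x² dx)}. -/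
/-!
On `x ≥ ε^{1/3}` the cutoff in `μ_ε` is inactive, `μ_ε(x) = 1 - ε/x³`, and the two arguments
take the closed forms `a₁ = √(x² - ε/(2x))` and `a₂ = √(ε/(2x))`, both injective there with
non-vanishing derivative. Hence the pushforward of `x² dx` on `x ≥ ε^{1/3}` under `a₂` is
absolutely continuous with respect to `y² dy`, which bounds `ψ ∘ a₂` by `‖ψ‖_∞` there; and the
Jacobian bound `x² ≤ 2 |a₁'(x)| a₁(x)²` makes its pushforward under `a₁` at most `2 y² dy`, so
that `‖1_{x ≥ ε^{1/3}} η ∘ a₁‖_p ≤ 2^{1/p} ‖η‖_p ≤ 2 ‖η‖_p`. Hölder's inequality with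
exponents `(∞, p)` concludes.
-/

open Real MeasureTheory

/-- The measure `x² dx` on `ℝ⁺ = (0, ∞)`. -/
noncomputable def radMeasure : Measure ℝ :=
  (volume.restrict (Set.Ioi (0:ℝ))).withDensity (fun x => ENNReal.ofReal (x ^ 2))

open Set
open scoped ENNReal

section ChangeOfVariables

variable {s t : Set ℝ} {f f' : ℝ → ℝ}

theorem map_withDensity_le_of_le_abs_deriv_mul (hs : MeasurableSet s) (hfm : Measurable f)
    (hf' : ∀ x ∈ s, HasDerivWithinAt f (f' x) s x) (hf : InjOn f s) (hst : MapsTo f s t)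
    {w v : ℝ → ℝ≥0∞} (hw : ∀ x ∈ s, w x ≤ ENNReal.ofReal |f' x| * v (f x)) :
    ((volume.restrict s).withDensity w).map f ≤ (volume.restrict t).withDensity v := by
  refine Measure.le_iff.2 fun T hT => ?_
  have hA : MeasurableSet (f ⁻¹' T ∩ s) := (hfm hT).inter hs
  rw [Measure.map_apply hfm hT, withDensity_apply _ (hfm hT), withDensity_apply _ hT,
    Measure.restrict_restrict (hfm hT), Measure.restrict_restrict hT]
  calc ∫⁻ x in f ⁻¹' T ∩ s, w x
      ≤ ∫⁻ x in f ⁻¹' T ∩ s, ENNReal.ofReal |f' x| * v (f x) :=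
        setLIntegral_mono' hA fun x hx => hw x hx.2
    _ = ∫⁻ y in f '' (f ⁻¹' T ∩ s), v y :=
        (lintegral_image_eq_lintegral_abs_deriv_mul hA
          (fun x hx => (hf' x hx.2).mono inter_subset_right) (hf.mono inter_subset_right) v).symm
    _ ≤ ∫⁻ y in T ∩ t, v y :=
        lintegral_mono_set (image_subset_iff.2 fun x hx => ⟨hx.1, hst hx.2⟩)

theorem map_restrict_absolutelyContinuous_of_deriv_ne_zero (hs : MeasurableSet s)
    (hfm : Measurable f) (hf' : ∀ x ∈ s, HasDerivWithinAt f (f' x) s x) (hf : InjOn f s)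
    (hst : MapsTo f s t) (hf'0 : ∀ x ∈ s, f' x ≠ 0) :
    (volume.restrict s).map f ≪ volume.restrict t := by
  have hmap : ((volume.restrict s).withDensity fun x => ENNReal.ofReal |f' x|).map f =
      volume.restrict (f '' s) := by
    simpa only [ContinuousLinearMap.det_toSpanSingleton] using
      map_withDensity_abs_det_fderiv_eq_addHaar volume hs.nullMeasurableSet
        (fun x hx => (hf' x hx).hasFDerivWithinAt) hf
  have hdens : AEMeasurable (fun x => ENNReal.ofReal |f' x|) (volume.restrict s) := by
    simpa only [ContinuousLinearMap.det_toSpanSingleton] using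
      aemeasurable_ofReal_abs_det_fderivWithin volume hs
        (fun x hx => (hf' x hx).hasFDerivWithinAt)
  have hpos : ∀ᵐ x ∂volume.restrict s, ENNReal.ofReal |f' x| ≠ 0 := by
    filter_upwards [ae_restrict_mem hs] with x hx
    simpa using hf'0 x hx
  refine ((withDensity_absolutelyContinuous' hdens hpos).map hfm).trans ?_
  rw [hmap]
  exact Measure.absolutelyContinuous_of_le (Measure.restrict_mono hst.image_subset le_rfl)

end ChangeOfVariables

section LpBounds

variable {α β E : Type*} [MeasurableSpace α] [MeasurableSpace β] [NormedAddCommGroup E]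
  {μ : Measure α} {ν : Measure β} {f : α → β} {g : β → E} {s : Set α}

theorem eLpNorm_indicator_comp_le_of_map_le {p c : ℝ≥0∞} (hs : MeasurableSet s)
    (hf : Measurable f) (hg : StronglyMeasurable g) (hp : p ≠ ⊤)
    (h : (μ.restrict s).map f ≤ c • ν) :
    eLpNorm (s.indicator (g ∘ f)) p μ ≤ c ^ (1 / p).toReal * eLpNorm g p ν := by
  rw [eLpNorm_indicator_eq_eLpNorm_restrict hs,
    ← eLpNorm_map_measure hg.aestronglyMeasurable hf.aemeasurable]
  exact (eLpNorm_mono_measure g h).trans (eLpNorm_smul_measure_of_ne_top hp g c).le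

theorem eLpNorm_top_indicator_comp_le_of_map_ac (hs : MeasurableSet s) (hf : Measurable f)
    (hg : StronglyMeasurable g) (h : (μ.restrict s).map f ≪ ν) :
    eLpNorm (s.indicator (g ∘ f)) ⊤ μ ≤ eLpNorm g ⊤ ν := by
  rw [eLpNorm_indicator_eq_eLpNorm_restrict hs,
    ← eLpNorm_map_measure hg.aestronglyMeasurable hf.aemeasurable]
  exact eLpNormEssSup_mono_measure g h

theorem eLpNorm_const_mul_mul_le {K : ℝ} (hK : 0 ≤ K) {u v : α → ℝ}
    (hv : AEStronglyMeasurable v μ) (p : ℝ≥0∞) :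
    eLpNorm (fun x => K * v x * u x) p μ ≤ ENNReal.ofReal K * eLpNorm u ⊤ μ * eLpNorm v p μ :=
  eLpNorm_le_eLpNorm_top_mul_eLpNorm p u hv (fun a b => K * b * a) K.toNNReal
    (Filter.Eventually.of_forall fun x => le_of_eq (by
      rw [nnnorm_mul, nnnorm_mul, Real.nnnorm_of_nonneg hK, Real.toNNReal_of_nonneg hK]; ring))

theorem two_rpow_one_div_toReal_le {p : ℝ≥0∞} (hp : 1 ≤ p) : (2 : ℝ≥0∞) ^ (1 / p).toReal ≤ 2 := by
  refine (ENNReal.rpow_le_rpow_of_exponent_le one_le_two ?_).trans_eq (ENNReal.rpow_one 2)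
  rw [one_div]
  exact ENNReal.toReal_le_of_le_ofReal zero_le_one (ENNReal.ofReal_one ▸ ENNReal.inv_le_one.2 hp)

end LpBounds

theorem radMeasure_restrict {s : Set ℝ} (hs : MeasurableSet s) (hs0 : s ⊆ Ioi 0) :
    radMeasure.restrict s = (volume.restrict s).withDensity fun x => ENNReal.ofReal (x ^ 2) := by
  rw [radMeasure, restrict_withDensity hs, Measure.restrict_restrict hs, inter_eq_left.2 hs0]

theorem restrict_Ioi_absolutelyContinuous_radMeasure : volume.restrict (Ioi 0) ≪ radMeasure := by
  refine withDensity_absolutelyContinuous' (by fun_prop) ?_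
  filter_upwards [ae_restrict_mem measurableSet_Ioi] with x (hx : 0 < x)
  simpa using hx.ne'

section Kernel

variable {ε x : ℝ}

-- On `x ≥ ε^{1/3}` these are the paper's `a₁(x, μ_ε(x))` and `a₂(x, μ_ε(x))`.
noncomputable def kernelA₁ (ε x : ℝ) : ℝ := √(x ^ 2 - ε / (2 * x))

noncomputable def kernelA₂ (ε x : ℝ) : ℝ := √(ε / (2 * x))

theorem pos_and_le_pow_three_of_mem_Ici (hε : 0 < ε) (hx : x ∈ Ici (ε ^ ((1 : ℝ) / 3))) :
    0 < x ∧ ε ≤ x ^ 3 := by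
  have hcbrt : 0 < ε ^ ((1 : ℝ) / 3) := rpow_pos_of_pos hε _
  refine ⟨hcbrt.trans_le hx, ?_⟩
  calc ε = (ε ^ ((1 : ℝ) / 3)) ^ 3 := by
        rw [← rpow_natCast, ← rpow_mul hε.le]; norm_num
    _ ≤ x ^ 3 := pow_le_pow_left₀ hcbrt.le hx 3

theorem Ici_cbrt_subset_Ioi (hε : 0 < ε) : Ici (ε ^ ((1 : ℝ) / 3)) ⊆ Ioi 0 :=
  fun _ hx => (pos_and_le_pow_three_of_mem_Ici hε hx).1

theorem div_two_mul_le_sq_div_two (hx : 0 < x) (hεx : ε ≤ x ^ 3) : ε / (2 * x) ≤ x ^ 2 / 2 := by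
  rw [div_le_iff₀ (by positivity)]
  nlinarith

theorem one_sub_min_two_eq (hx : 0 < x) (hεx : ε ≤ x ^ 3) :
    1 - min 2 (ε * x ^ (-3 : ℝ)) = 1 - ε / x ^ 3 := by
  have hx3 : 0 < x ^ 3 := by positivity
  rw [rpow_neg hx.le, show (3 : ℝ) = (3 : ℕ) by norm_num, rpow_natCast, ← div_eq_mul_inv,
    min_eq_right ((div_le_iff₀ hx3).2 (by linarith))]

theorem mul_sqrt_div_sq {t : ℝ} (hx : 0 < x) : x * √(t / x ^ 2) = √t := by
  rw [sqrt_div' _ (sq_nonneg x), sqrt_sq hx.le, mul_div_cancel₀ _ hx.ne']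

theorem mul_sqrt_one_add_eq_kernelA₁ (hε : 0 < ε) (hx : x ∈ Ici (ε ^ ((1 : ℝ) / 3))) :
    x * √((1 + (1 - min 2 (ε * x ^ (-3 : ℝ)))) / 2) = kernelA₁ ε x := by
  obtain ⟨hx0, hεx⟩ := pos_and_le_pow_three_of_mem_Ici hε hx
  rw [one_sub_min_two_eq hx0 hεx,
    show (1 + (1 - ε / x ^ 3)) / 2 = (x ^ 2 - ε / (2 * x)) / x ^ 2 by field_simp; ring,
    mul_sqrt_div_sq hx0, kernelA₁]

theorem mul_sqrt_one_sub_eq_kernelA₂ (hε : 0 < ε) (hx : x ∈ Ici (ε ^ ((1 : ℝ) / 3))) :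
    x * √((1 - (1 - min 2 (ε * x ^ (-3 : ℝ)))) / 2) = kernelA₂ ε x := by
  obtain ⟨hx0, hεx⟩ := pos_and_le_pow_three_of_mem_Ici hε hx
  rw [one_sub_min_two_eq hx0 hεx,
    show (1 - (1 - ε / x ^ 3)) / 2 = ε / (2 * x) / x ^ 2 by field_simp; ring,
    mul_sqrt_div_sq hx0, kernelA₂]

theorem measurable_kernelA₁ : Measurable (kernelA₁ ε) := by unfold kernelA₁; fun_prop

theorem measurable_kernelA₂ : Measurable (kernelA₂ ε) := by unfold kernelA₂; fun_prop

theorem hasDerivAt_const_div_two_mul (hx : x ≠ 0) :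
    HasDerivAt (fun y => ε / (2 * y)) (-(ε / (2 * x ^ 2))) x := by
  rw [show (fun y : ℝ => ε / (2 * y)) = fun y => ε / 2 * y⁻¹ from funext fun y => by ring]
  exact ((hasDerivAt_inv hx).const_mul (ε / 2)).congr_deriv (by ring)

theorem hasDerivAt_kernelA₁ (hx : 0 < x) (hεx : ε ≤ x ^ 3) :
    HasDerivAt (kernelA₁ ε) ((2 * x + ε / (2 * x ^ 2)) / (2 * kernelA₁ ε x)) x := by
  have hrad : x ^ 2 - ε / (2 * x) ≠ 0 := by
    nlinarith [div_two_mul_le_sq_div_two hx hεx, pow_pos hx 2]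
  have hin : HasDerivAt (fun y => y ^ 2 - ε / (2 * y)) (2 * x + ε / (2 * x ^ 2)) x :=
    ((hasDerivAt_pow 2 x).sub (hasDerivAt_const_div_two_mul hx.ne')).congr_deriv (by ring)
  exact ((hasDerivAt_sqrt hrad).comp x hin).congr_deriv (by rw [kernelA₁]; ring)

theorem hasDerivAt_kernelA₂ (hε : 0 < ε) (hx : 0 < x) :
    HasDerivAt (kernelA₂ ε) (-(ε / (2 * x ^ 2)) / (2 * kernelA₂ ε x)) x :=
  ((hasDerivAt_sqrt (by positivity)).comp x (hasDerivAt_const_div_two_mul hx.ne')).congr_deriv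
    (by rw [kernelA₂]; ring)

theorem kernelA₁_strictMonoOn (hε : 0 < ε) :
    StrictMonoOn (kernelA₁ ε) (Ici (ε ^ ((1 : ℝ) / 3))) := by
  intro x hx y hy hxy
  obtain ⟨hx0, hεx⟩ := pos_and_le_pow_three_of_mem_Ici hε hx
  have hεxy : ε / (2 * y) ≤ ε / (2 * x) := by gcongr
  refine sqrt_lt_sqrt ?_ ?_
  · nlinarith [div_two_mul_le_sq_div_two hx0 hεx, pow_pos hx0 2]
  · nlinarith

theorem kernelA₂_strictAntiOn (hε : 0 < ε) : StrictAntiOn (kernelA₂ ε) (Ioi 0) := by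
  intro x (hx : 0 < x) y (hy : 0 < y) hxy
  exact sqrt_lt_sqrt (by positivity) (by gcongr)

theorem half_le_kernelA₁ (hx : 0 < x) (hεx : ε ≤ x ^ 3) : x / 2 ≤ kernelA₁ ε x :=
  (le_sqrt' (by positivity)).2 (by nlinarith [div_two_mul_le_sq_div_two hx hεx])

theorem sq_le_abs_deriv_kernelA₁_mul (hε : 0 < ε) (hx : 0 < x) (hεx : ε ≤ x ^ 3) :
    x ^ 2 ≤ |(2 * x + ε / (2 * x ^ 2)) / (2 * kernelA₁ ε x)| * (2 * kernelA₁ ε x ^ 2) := by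
  have ha := half_le_kernelA₁ hx hεx
  have ha0 : 0 < kernelA₁ ε x := by linarith
  rw [abs_of_pos (by positivity)]
  calc x ^ 2 = 2 * x * (x / 2) := by ring
    _ ≤ (2 * x + ε / (2 * x ^ 2)) * kernelA₁ ε x := by
        gcongr
        exact le_add_of_nonneg_right (by positivity)
    _ = _ := by field_simp

theorem kernelA₂_pos (hε : 0 < ε) (hx : 0 < x) : 0 < kernelA₂ ε x :=
  sqrt_pos.2 (by positivity)

theorem map_kernelA₁_restrict_radMeasure_le (hε : 0 < ε) :
    (radMeasure.restrict (Ici (ε ^ ((1 : ℝ) / 3)))).map (kernelA₁ ε) ≤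
      (2 : ℝ≥0∞) • radMeasure := by
  rw [radMeasure_restrict measurableSet_Ici (Ici_cbrt_subset_Ioi hε), radMeasure,
    ← withDensity_smul' _ _ ENNReal.ofNat_ne_top]
  refine map_withDensity_le_of_le_abs_deriv_mul measurableSet_Ici measurable_kernelA₁
    (f' := fun x => (2 * x + ε / (2 * x ^ 2)) / (2 * kernelA₁ ε x)) (fun x hx => ?_)
    (kernelA₁_strictMonoOn hε).injOn (fun x hx => ?_) (fun x hx => ?_) <;>
    obtain ⟨hx0, hεx⟩ := pos_and_le_pow_three_of_mem_Ici hε hx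
  · exact (hasDerivAt_kernelA₁ hx0 hεx).hasDerivWithinAt
  · exact (half_pos hx0).trans_le (half_le_kernelA₁ hx0 hεx)
  · rw [Pi.smul_apply, smul_eq_mul, ← ENNReal.ofReal_ofNat 2, ← ENNReal.ofReal_mul zero_le_two,
      ← ENNReal.ofReal_mul (abs_nonneg _)]
    exact ENNReal.ofReal_le_ofReal (sq_le_abs_deriv_kernelA₁_mul hε hx0 hεx)

theorem map_kernelA₂_restrict_radMeasure_absolutelyContinuous (hε : 0 < ε) :
    (radMeasure.restrict (Ici (ε ^ ((1 : ℝ) / 3)))).map (kernelA₂ ε) ≪ radMeasure := by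
  have hs := Ici_cbrt_subset_Ioi hε
  rw [radMeasure_restrict measurableSet_Ici hs]
  refine ((withDensity_absolutelyContinuous _ _).map measurable_kernelA₂).trans
    ((map_restrict_absolutelyContinuous_of_deriv_ne_zero measurableSet_Ici measurable_kernelA₂
      (fun x hx => (hasDerivAt_kernelA₂ hε (hs hx)).hasDerivWithinAt)
      ((kernelA₂_strictAntiOn hε).injOn.mono hs) (fun x hx => kernelA₂_pos hε (hs hx))
      (fun x hx => ?_)).trans restrict_Ioi_absolutelyContinuous_radMeasure)
  have hx0 : (0 : ℝ) < x := hs hx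
  exact div_ne_zero (neg_ne_zero.2 (by positivity)) (mul_pos two_pos (kernelA₂_pos hε hx0)).ne'

theorem eLpNorm_indicator_comp_kernelA₁_le (hε : 0 < ε) {η : ℝ → ℝ} (hη : Measurable η)
    {p : ℝ≥0∞} (hp : 1 ≤ p) (hp_top : p ≠ ⊤) :
    eLpNorm ((Ici (ε ^ ((1 : ℝ) / 3))).indicator (η ∘ kernelA₁ ε)) p radMeasure ≤
      2 * eLpNorm η p radMeasure :=
  (eLpNorm_indicator_comp_le_of_map_le measurableSet_Ici measurable_kernelA₁
    hη.stronglyMeasurable hp_top (map_kernelA₁_restrict_radMeasure_le hε)).trans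
    (by gcongr; exact two_rpow_one_div_toReal_le hp)

theorem eLpNorm_top_indicator_comp_kernelA₂_le (hε : 0 < ε) {ψ : ℝ → ℝ} (hψ : Measurable ψ) :
    eLpNorm ((Ici (ε ^ ((1 : ℝ) / 3))).indicator (ψ ∘ kernelA₂ ε)) ⊤ radMeasure ≤
      eLpNorm ψ ⊤ radMeasure :=
  eLpNorm_top_indicator_comp_le_of_map_ac measurableSet_Ici measurable_kernelA₂
    hψ.stronglyMeasurable (map_kernelA₂_restrict_radMeasure_absolutelyContinuous hε)

end Kernel

theorem stmt_13_general (ε : ℝ) (hε : 0 < ε) (p : ℝ) (hp : 1 ≤ p)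
    (η ψ : ℝ → ℝ) (hη : Measurable η) (hψ : Measurable ψ)
    (με a₁ a₂ B : ℝ → ℝ)
    (hμε : ∀ x, με x = 1 - min 2 (ε * x ^ (-3 : ℝ)))
    (ha₁ : ∀ x, a₁ x = x * Real.sqrt ((1 + με x) / 2))
    (ha₂ : ∀ x, a₂ x = x * Real.sqrt ((1 - με x) / 2))
    (hB : ∀ x, B x = (4 / (π * ε)) * η (a₁ x) * ψ (a₂ x)
        * (if ε ^ ((1:ℝ)/3) ≤ x then 1 else 0)) :
    eLpNorm B (ENNReal.ofReal p) radMeasure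
      ≤ ENNReal.ofReal (8 / (π * ε)) * eLpNorm ψ ⊤ radMeasure
          * eLpNorm η (ENNReal.ofReal p) radMeasure := by
  set s := Ici (ε ^ ((1 : ℝ) / 3))
  have hK : 0 ≤ 4 / (π * ε) := by positivity
  have hB' : B = fun x =>
      4 / (π * ε) * s.indicator (η ∘ kernelA₁ ε) x * s.indicator (ψ ∘ kernelA₂ ε) x := by
    funext x
    by_cases hx : x ∈ s
    · rw [hB, if_pos (mem_Ici.1 hx), ha₁, ha₂, hμε, mul_sqrt_one_add_eq_kernelA₁ hε hx,
        mul_sqrt_one_sub_eq_kernelA₂ hε hx, indicator_of_mem hx, indicator_of_mem hx, mul_one]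
      rfl
    · rw [hB, if_neg (mt mem_Ici.2 hx), indicator_of_notMem hx, mul_zero, mul_zero, zero_mul]
  rw [hB']
  calc _ ≤ ENNReal.ofReal (4 / (π * ε)) * eLpNorm (s.indicator (ψ ∘ kernelA₂ ε)) ⊤ radMeasure
        * eLpNorm (s.indicator (η ∘ kernelA₁ ε)) (ENNReal.ofReal p) radMeasure :=
      eLpNorm_const_mul_mul_le hK
        ((hη.comp measurable_kernelA₁).indicator measurableSet_Ici).aestronglyMeasurable _
    _ ≤ ENNReal.ofReal (4 / (π * ε)) * eLpNorm ψ ⊤ radMeasure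
        * (2 * eLpNorm η (ENNReal.ofReal p) radMeasure) := by
      gcongr
      · exact eLpNorm_top_indicator_comp_kernelA₂_le hε hψ
      · exact eLpNorm_indicator_comp_kernelA₁_le hε hη (ENNReal.one_le_ofReal.2 hp)
          ENNReal.ofReal_ne_top
    _ = _ := by
      rw [show 8 / (π * ε) = 4 / (π * ε) * 2 by ring, ENNReal.ofReal_mul hK, ENNReal.ofReal_ofNat]
      ring

/-- `‖B_ε(η, ψ)‖_{L^p(ℝ⁺, x²dx)} ≤ (8/(πε)) ‖ψ‖_{L^∞(ℝ⁺)} ‖η‖_{L^p(ℝ⁺, x²dx)}`,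
where `B_ε(η,ψ)(x) = (4/(πε)) η(a₁(x, μ_ε(x))) ψ(a₂(x, μ_ε(x))) 1_{x ≥ ε^{1/3}}`. -/
theorem stmt_13 (ε : ℝ) (hε : 0 < ε) (p : ℝ) (hp : 1 ≤ p)
    (η ψ : ℝ → ℝ) (hη : Measurable η) (hψ : Measurable ψ)
    (hη0 : ∀ x, 0 ≤ η x) (hψ0 : ∀ x, 0 ≤ ψ x)
    (με a₁ a₂ B : ℝ → ℝ)
    (hμε : ∀ x, με x = 1 - min 2 (ε * x ^ (-3 : ℝ)))
    (ha₁ : ∀ x, a₁ x = x * Real.sqrt ((1 + με x) / 2))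
    (ha₂ : ∀ x, a₂ x = x * Real.sqrt ((1 - με x) / 2))
    (hB : ∀ x, B x = (4 / (π * ε)) * η (a₁ x) * ψ (a₂ x)
        * (if ε ^ ((1:ℝ)/3) ≤ x then 1 else 0)) :
    eLpNorm B (ENNReal.ofReal p) radMeasure
      ≤ ENNReal.ofReal (8 / (π * ε)) * eLpNorm ψ ⊤ radMeasure
          * eLpNorm η (ENNReal.ofReal p) radMeasure :=
  stmt_13_general ε hε p hp η ψ hη hψ με a₁ a₂ B hμε ha₁ ha₂ hB
end
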